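/- Let d be a natural number and let F be a linear subspace of R = C^∞(M,ℝ) which is transverse to every ideal of R of finite codimension at most d+1 (i.e., F + J = R for every such ideal J). Then for any two ideals I, I' of R of finite codimension at most d, one has I ⊆ I' if and only if F ∩ I ⊆ F ∩ I'. In particular the map sending an ideal I of codimension exactly d to F ∩ I is injective. -/

import Mathlib

open scoped Manifold
open Module Filter Topology

noncomputable section

/-- The ℝ-algebra of smooth real-valued functions on a manifold `M` modelled on `ℝ^m`. -/
abbrev SmoothFns (m : ℕ) (M : Type*) [TopologicalSpace M]
    [ChartedSpace (EuclideanSpace ℝ (Fin m)) M] : Type _ :=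
  C^(⊤ : ℕ∞)⟮𝓡 m, M; 𝓘(ℝ, ℝ), ℝ⟯

variable {m : ℕ} {M : Type*} [TopologicalSpace M] [T2Space M] [SecondCountableTopology M]
  [ChartedSpace (EuclideanSpace ℝ (Fin m)) M] [IsManifold (𝓡 m) (⊤ : ℕ∞) M]

/-- The ideal `𝔪ₓ` of smooth functions vanishing at the point `x`. -/
def mIdeal (x : M) : Ideal (SmoothFns m M) where
  carrier := {f | f x = 0}
  add_mem' := by intro f g hf hg; simp_all
  zero_mem' := by simp
  smul_mem' := by intro c f hf; simp_all

/-- The ideal `𝔫ₓ` of smooth functions vanishing on some neighbourhood of the point `x`. -/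
def nIdeal (x : M) : Ideal (SmoothFns m M) where
  carrier := {f | ∀ᶠ y in 𝓝 x, f y = 0}
  add_mem' := by
    intro f g hf hg
    filter_upwards [hf, hg] with y h1 h2
    simp [h1, h2]
  zero_mem' := by filter_upwards with y; simp
  smul_mem' := by
    intro c f hf
    filter_upwards [hf] with y h
    simp [h]

/-- The spectrum of an ideal: the set of common zeros of its elements. -/
def idealSpec (I : Ideal (SmoothFns m M)) : Set M :=
  {x : M | ∀ f ∈ I, f x = 0}

/-!
Suppose `F ⊓ I ≤ I'` but `I ≰ I'`. Since `R ⧸ (I ⊓ I')` is finite-dimensional, there is an ideal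
`J` with `I ⊓ I' ≤ J ⋖ I`. For `g ∈ I \ J` the colon ideal `(J : g)` is maximal of finite
codimension, and since every `1 + f ^ 2` is invertible in `C^∞(M)`, its residue field is `ℝ`.
Hence `I = J + ℝ g`, so `J` has codimension at most `d + 1` and `F ⊔ J = ⊤`. The modular law
then gives `I = (F ⊓ I) ⊔ J ≤ J`, a contradiction.
-/

section CovBy

variable {R X : Type*} [Ring R] [AddCommGroup X] [Module R X]

theorem Submodule.exists_le_covBy_of_lt {N P : Submodule R X} [IsNoetherian R (X ⧸ N)]
    (h : N < P) : ∃ Q, N ≤ Q ∧ Q ⋖ P := by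
  have : WellFoundedGT (Set.Ici N) := (comapMkQRelIso N).symm.strictMono.wellFoundedGT
  have hNP : (⟨N, Set.mem_Ici.mpr le_rfl⟩ : Set.Ici N) < ⟨P, Set.mem_Ici.mpr h.le⟩ := h
  obtain ⟨Q, -, hQP⟩ := _root_.exists_le_covBy_of_lt hNP
  refine ⟨Q, Set.mem_Ici.mp Q.prop, ?_⟩
  exact (Set.OrdConnected.apply_covBy_apply_iff (OrderEmbedding.subtype (· ∈ Set.Ici N))
    (by rw [OrderEmbedding.coe_subtype, Subtype.range_coe]; exact Set.ordConnected_Ici)).mpr hQP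

end CovBy

theorem le_of_sup_eq_top_of_inf_le {α : Type*} [Lattice α] [IsModularLattice α] [OrderTop α]
    {F I J : α} (hJI : J ≤ I) (hF : F ⊔ J = ⊤) (hFI : F ⊓ I ≤ J) : I ≤ J :=
  calc I = (J ⊔ F) ⊓ I := by rw [sup_comm, hF, top_inf_eq]
    _ = J ⊔ F ⊓ I := sup_inf_assoc_of_le F hJI
    _ ≤ J := sup_le le_rfl hFI

theorem algebraMap_surjective_of_one_add_sq_ne_zero {K : Type*} [Field K] [Algebra ℝ K]
    [FiniteDimensional ℝ K] (h : ∀ x : K, 1 + x ^ 2 ≠ 0) :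
    Function.Surjective (algebraMap ℝ K) := by
  have : Algebra.IsAlgebraic ℝ K := Algebra.IsAlgebraic.of_finite ℝ K
  let ψ : K →ₐ[ℝ] ℂ := IsAlgClosed.lift
  intro x
  have him : (ψ x).im = 0 := by
    by_contra hb
    let y := (x - algebraMap ℝ K (ψ x).re) / algebraMap ℝ K (ψ x).im
    have hy : ψ y = Complex.I := by
      simp only [y, map_div₀, map_sub, AlgHom.commutes, Complex.coe_algebraMap]
      rw [div_eq_iff (by exact_mod_cast hb)]
      apply Complex.ext <;> simp
    refine h y (ψ.toRingHom.injective ?_)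
    simp [hy]
  refine ⟨(ψ x).re, ψ.toRingHom.injective ?_⟩
  apply Complex.ext <;> simp [him]

theorem ContMDiffMap.isUnit_of_forall_ne_zero {𝕜 E H N : Type*} [NontriviallyNormedField 𝕜]
    [NormedAddCommGroup E] [NormedSpace 𝕜 E] [TopologicalSpace H] {I : ModelWithCorners 𝕜 E H}
    [TopologicalSpace N] [ChartedSpace H N] {n : WithTop ℕ∞} (f : C^n⟮I, N; 𝓘(𝕜, 𝕜), 𝕜⟯)
    (hf : ∀ x, f x ≠ 0) : IsUnit f :=
  isUnit_iff_exists_inv.mpr ⟨⟨fun x => (f x)⁻¹, f.contMDiff.inv₀ hf⟩,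
    ContMDiffMap.ext fun x => mul_inv_cancel₀ (hf x)⟩

namespace Ideal

variable {R : Type*} [CommRing R]

theorem sup_span_singleton_eq_of_covBy {J I : Ideal R} (hJI : J ⋖ I) {g : R}
    (hgI : g ∈ I) (hgJ : g ∉ J) : J ⊔ span {g} = I :=
  (hJI.eq_or_eq le_sup_left (sup_le hJI.le ((span_singleton_le_iff_mem _).mpr hgI))).resolve_left
    fun h => hgJ (h ▸ mem_sup_right (mem_span_singleton_self g))

theorem isMaximal_colon_of_covBy {J I : Ideal R} (hJI : J ⋖ I) {g : R}
    (hgI : g ∈ I) (hgJ : g ∉ J) : (J.colon {g}).IsMaximal := by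
  rw [isMaximal_iff]
  refine ⟨by simpa [Submodule.mem_colon_singleton] using hgJ, fun K r hK hr hrK => ?_⟩
  rw [Submodule.mem_colon_singleton, smul_eq_mul] at hr
  obtain ⟨j, hj, _, hs, hsum⟩ := Submodule.mem_sup.mp
    ((sup_span_singleton_eq_of_covBy hJI (I.mul_mem_left r hgI) hr).ge hgI)
  obtain ⟨s, rfl⟩ := mem_span_singleton'.mp hs
  have h1 : 1 - s * r ∈ J.colon {g} := by
    rw [Submodule.mem_colon_singleton, smul_eq_mul,
      show (1 - s * r) * g = j by linear_combination -hsum]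
    exact hj
  simpa using K.add_mem (hK h1) (K.mul_mem_left s hrK)

section Field

variable (k : Type*) [Field k] [Algebra k R]

theorem finiteDimensional_quotient_of_le {J P : Ideal R} (h : J ≤ P)
    [FiniteDimensional k (R ⧸ J)] : FiniteDimensional k (R ⧸ P) :=
  Module.Finite.of_surjective (Quotient.factorₐ k h).toLinearMap (Quotient.factor_surjective h)

theorem finiteDimensional_quotient_inf (I J : Ideal R) [FiniteDimensional k (R ⧸ I)]
    [FiniteDimensional k (R ⧸ J)] : FiniteDimensional k (R ⧸ (I ⊓ J)) := by
  refine Module.Finite.of_injective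
    ((Quotient.factorₐ k inf_le_left).toLinearMap.prod
      (Quotient.factorₐ k inf_le_right).toLinearMap) ?_
  rw [← LinearMap.ker_eq_bot, LinearMap.ker_eq_bot']
  intro y hy
  obtain ⟨x, rfl⟩ := Quotient.mk_surjective y
  simp only [LinearMap.prod_apply, Function.prod, Prod.mk_eq_zero, AlgHom.toLinearMap_apply,
    Quotient.factorₐ_apply_mk, Quotient.eq_zero_iff_mem] at hy ⊢
  exact hy

theorem finrank_quotient_le_add_one {J I : Ideal R} (hJI : J ≤ I)
    [FiniteDimensional k (R ⧸ J)] {g : R} (hg : ∀ x ∈ I, ∃ a : k, x - a • g ∈ J) :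
    finrank k (R ⧸ J) ≤ finrank k (R ⧸ I) + 1 := by
  have := finiteDimensional_quotient_of_le k hJI
  let f := (Quotient.factorₐ k hJI).toLinearMap
  have hker : LinearMap.ker f ≤ k ∙ Quotient.mk J g := by
    intro y hy
    obtain ⟨x, rfl⟩ := Quotient.mk_surjective y
    obtain ⟨a, ha⟩ := hg x (by simpa [f, Quotient.eq_zero_iff_mem] using hy)
    refine Submodule.mem_span_singleton.mpr ⟨a, ?_⟩
    rw [← Quotient.mkₐ_eq_mk k, ← map_smul, eq_comm, Quotient.mkₐ_eq_mk, Quotient.eq]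
    exact ha
  calc finrank k (R ⧸ J) = finrank k (LinearMap.range f) + finrank k (LinearMap.ker f) :=
        (LinearMap.finrank_range_add_finrank_ker f).symm
    _ ≤ finrank k (R ⧸ I) + finrank k (k ∙ Quotient.mk J g) :=
        add_le_add (Submodule.finrank_le _) (Submodule.finrank_mono hker)
    _ ≤ finrank k (R ⧸ I) + 1 := by
        gcongr; simpa using finrank_span_le_card ({Quotient.mk J g} : Set (R ⧸ J))

end Field

section Real

variable [Algebra ℝ R] (hR : ∀ f : R, IsUnit (1 + f ^ 2))
include hR

theorem exists_sub_algebraMap_mem_of_isMaximal (P : Ideal R) [P.IsMaximal]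
    [FiniteDimensional ℝ (R ⧸ P)] (r : R) : ∃ a : ℝ, r - algebraMap ℝ R a ∈ P := by
  let := Quotient.field P
  have hK : ∀ x : R ⧸ P, 1 + x ^ 2 ≠ 0 := by
    intro x
    obtain ⟨f, rfl⟩ := Quotient.mk_surjective x
    exact ((hR f).map (Quotient.mk P)).ne_zero
  obtain ⟨a, ha⟩ := algebraMap_surjective_of_one_add_sq_ne_zero hK (Quotient.mk P r)
  exact ⟨a, Quotient.eq.mp ha.symm⟩

theorem exists_sub_smul_mem_of_covBy {J I : Ideal R} (hJI : J ⋖ I)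
    [FiniteDimensional ℝ (R ⧸ J)] : ∃ g : R, ∀ x ∈ I, ∃ a : ℝ, x - a • g ∈ J := by
  obtain ⟨g, hgI, hgJ⟩ := SetLike.exists_of_lt hJI.lt
  have := isMaximal_colon_of_covBy hJI hgI hgJ
  have := finiteDimensional_quotient_of_le ℝ fun r (hr : r ∈ J) =>
    Submodule.mem_colon_singleton.mpr (J.mul_mem_right g hr)
  refine ⟨g, fun x hx => ?_⟩
  obtain ⟨j, hj, _, hs, rfl⟩ :=
    Submodule.mem_sup.mp ((sup_span_singleton_eq_of_covBy hJI hgI hgJ).ge hx)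
  obtain ⟨s, rfl⟩ := mem_span_singleton'.mp hs
  obtain ⟨a, ha⟩ := exists_sub_algebraMap_mem_of_isMaximal hR (J.colon {g}) s
  refine ⟨a, ?_⟩
  rw [Submodule.mem_colon_singleton, smul_eq_mul] at ha
  rw [Algebra.smul_def,
    show j + s * g - algebraMap ℝ R a * g = j + (s - algebraMap ℝ R a) * g by ring]
  exact J.add_mem hj ha

theorem finrank_quotient_le_of_covBy {J I : Ideal R} (hJI : J ⋖ I)
    [FiniteDimensional ℝ (R ⧸ J)] : finrank ℝ (R ⧸ J) ≤ finrank ℝ (R ⧸ I) + 1 :=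
  have ⟨_, hg⟩ := exists_sub_smul_mem_of_covBy hR hJI
  finrank_quotient_le_add_one ℝ hJI.le hg

theorem le_of_inf_le_inf_of_transversal {d : ℕ} {F : Submodule ℝ R}
    (hF : ∀ J : Ideal R, FiniteDimensional ℝ (R ⧸ J) →
      finrank ℝ (R ⧸ J) ≤ d + 1 → F ⊔ J.restrictScalars ℝ = ⊤)
    {I I' : Ideal R} [FiniteDimensional ℝ (R ⧸ I)] [FiniteDimensional ℝ (R ⧸ I')]
    (hI : finrank ℝ (R ⧸ I) ≤ d) (h : F ⊓ I.restrictScalars ℝ ≤ F ⊓ I'.restrictScalars ℝ) :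
    I ≤ I' := by
  by_contra hII'
  have := finiteDimensional_quotient_inf ℝ I I'
  have : IsNoetherian R (R ⧸ (I ⊓ I')) := isNoetherian_of_tower ℝ inferInstance
  obtain ⟨J, hJ, hJI⟩ := Submodule.exists_le_covBy_of_lt
    (inf_le_left.lt_of_not_ge fun hI => hII' (hI.trans inf_le_right))
  have := finiteDimensional_quotient_of_le ℝ hJ
  have hFJ := hF J this ((finrank_quotient_le_of_covBy hR hJI).trans (by omega))
  have hIJ : I.restrictScalars ℝ ≤ J.restrictScalars ℝ :=
    le_of_sup_eq_top_of_inf_le hJI.le hFJ fun x hx => hJ ⟨hx.2, (h hx).2⟩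
  exact hJI.lt.not_ge hIJ

end Real

end Ideal

theorem idealInclusion_iff_of_transversal
    (d : ℕ) (F : Submodule ℝ (SmoothFns m M))
    (hF : ∀ J : Ideal (SmoothFns m M), FiniteDimensional ℝ (SmoothFns m M ⧸ J) →
      Module.finrank ℝ (SmoothFns m M ⧸ J) ≤ d + 1 → F ⊔ J.restrictScalars ℝ = ⊤) :
    (∀ I I' : Ideal (SmoothFns m M),
      FiniteDimensional ℝ (SmoothFns m M ⧸ I) → Module.finrank ℝ (SmoothFns m M ⧸ I) ≤ d →
      FiniteDimensional ℝ (SmoothFns m M ⧸ I') → Module.finrank ℝ (SmoothFns m M ⧸ I') ≤ d →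
      (I ≤ I' ↔ F ⊓ I.restrictScalars ℝ ≤ F ⊓ I'.restrictScalars ℝ)) ∧
    (∀ I I' : Ideal (SmoothFns m M),
      FiniteDimensional ℝ (SmoothFns m M ⧸ I) → Module.finrank ℝ (SmoothFns m M ⧸ I) = d →
      FiniteDimensional ℝ (SmoothFns m M ⧸ I') → Module.finrank ℝ (SmoothFns m M ⧸ I') = d →
      F ⊓ I.restrictScalars ℝ = F ⊓ I'.restrictScalars ℝ → I = I') := by
  have hR (f : SmoothFns m M) : IsUnit (1 + f ^ 2) :=
    (1 + f ^ 2).isUnit_of_forall_ne_zero fun x => by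
      simp only [ContMDiffMap.coe_add, ContMDiffMap.coe_one, ContMDiffMap.coe_pow, Pi.add_apply,
        Pi.one_apply, Pi.pow_apply]
      positivity
  have key (I I' : Ideal (SmoothFns m M)) (_ : FiniteDimensional ℝ (SmoothFns m M ⧸ I))
      (hI : finrank ℝ (SmoothFns m M ⧸ I) ≤ d) (_ : FiniteDimensional ℝ (SmoothFns m M ⧸ I'))
      (h : F ⊓ I.restrictScalars ℝ ≤ F ⊓ I'.restrictScalars ℝ) : I ≤ I' :=
    Ideal.le_of_inf_le_inf_of_transversal hR hF hI h
  refine ⟨fun I I' hI hdI hI' _ => ⟨fun h => ?_, key I I' hI hdI hI'⟩,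
    fun I I' hI hdI hI' hdI' h =>
      (key I I' hI hdI.le hI' h.le).antisymm (key I' I hI' hdI'.le hI h.ge)⟩
  exact inf_le_inf_left F ((Submodule.restrictScalars_le ℝ).mpr h)
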